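/- arXiv:2508.10387 — 2 statements merged into one kernel-verified Lean document; each statement's English description precedes it below -/
import Mathlib

section
/- Under the curvature symmetry hypotheses on A and B, one has ∫_{ℝⁿ₊} E(x) U(x) dx = 0, where the integrand is absolutely integrable. -/
noncomputable section

open Real MeasureTheory

/-- Points of `ℝⁿ` written as `(x̃, xₙ)` with `x̃ ∈ ℝ^{n-1}`. -/
abbrev Pt (n : ℕ) : Type := (Fin (n - 1) → ℝ) × ℝ

/-- Squared Euclidean norm of the tangential part `x̃`. -/
def nsqT {m : ℕ} (y : Fin m → ℝ) : ℝ := ∑ i, (y i) ^ 2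

/-- Tangential partial derivative `∂ᵢ`, `i = 1, …, n-1`. -/
def pdT {n : ℕ} (i : Fin (n - 1)) (f : Pt n → ℝ) (x : Pt n) : ℝ :=
  fderiv ℝ f x (Pi.single i 1, 0)

/-- Normal partial derivative `∂ₙ`. -/
def pdN {n : ℕ} (f : Pt n → ℝ) (x : Pt n) : ℝ :=
  fderiv ℝ f x (0, 1)

/-- Euclidean Laplacian `Δ = Σᵢ ∂ᵢᵢ + ∂ₙₙ`. -/
def lap {n : ℕ} (f : Pt n → ℝ) (x : Pt n) : ℝ :=
  (∑ i, pdT i (pdT i f) x) + pdN (pdN f) x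

/-- The standard bubble
`U(x) = αₙ |K|^{-(n-2)/4} (|x̃|² + (xₙ + 𝔇)² - 1)^{-(n-2)/2}`. -/
def bubble (n : ℕ) (K D : ℝ) (x : Pt n) : ℝ :=
  (4 * (n : ℝ) * ((n : ℝ) - 1)) ^ (((n : ℝ) - 2) / 4) * |K| ^ (-(((n : ℝ) - 2) / 4)) *
    (nsqT x.1 + (x.2 + D) ^ 2 - 1) ^ (-(((n : ℝ) - 2) / 2))

/-!
Write `U = c s^q` with `s = |x̃|² + (xₙ + 𝔇)² - 1` and `q = -(n-2)/2`, so that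
`∂ᵢⱼU = 2cq s^{q-1} δᵢⱼ + 4cq(q-1) s^{q-2} xᵢxⱼ` on the half-space, where `s > 0`.
Contracted against `(1/3) Aᵢₖⱼₗ xₖxₗ + Bᵢⱼ xₙ²`, the `δ`-part dies by the trace conditions on `A`
and `B`, and the `xᵢxⱼ`-part of the `A`-term dies by antisymmetry of `A` in its first two indices.
Hence `E U = κ xₙ² s^{-n} ⟨B x̃, x̃⟩`. The weight `xₙ² s^{-n}` depends on `x̃` only through `|x̃|`,
so the reflections `x̃ᵢ ↦ -x̃ᵢ` kill the off-diagonal moments and the coordinate swaps make the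
diagonal ones equal: the integral is a multiple of `tr B = 0`. Integrability comes from
`|E U| ≲ s^{2-n} ≲ (1 + |x|)^{-2(n-2)}` and `n < 2(n-2)`.
-/

open Topology

section Algebra

variable {ι : Type*} [Fintype ι]

theorem sum_sum_eq_zero_of_antisymm (f : ι → ι → ℝ) (h : ∀ i k, f i k = -f k i) :
    ∑ i, ∑ k, f i k = 0 := by
  have : ∑ i, ∑ k, f i k = -∑ i, ∑ k, f i k := by
    conv_lhs => rw [Finset.sum_comm]
    simp only [← Finset.sum_neg_distrib]
    exact Finset.sum_congr rfl fun i _ => Finset.sum_congr rfl fun k _ => h k i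
  linarith

theorem sum_sum_mul_eq_zero_of_trace_eq_zero (B J : ι → ι → ℝ) (hB : ∑ i, B i i = 0)
    (hoff : ∀ i j, i ≠ j → J i j = 0) (hdiag : ∀ i j, J i i = J j j) :
    ∑ i, ∑ j, B i j * J i j = 0 := by
  rcases isEmpty_or_nonempty ι with hι | ⟨⟨i₀⟩⟩
  · simp
  calc ∑ i, ∑ j, B i j * J i j = ∑ i, B i i * J i₀ i₀ := by
        refine Finset.sum_congr rfl fun i _ => ?_
        rw [Finset.sum_eq_single i (fun j _ hji => by rw [hoff i j hji.symm, mul_zero])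
          (by simp), hdiag i i₀]
    _ = 0 := by rw [← Finset.sum_mul, hB, zero_mul]

variable (A : ι → ι → ι → ι → ℝ)

theorem sum_curvature_mul_mul_eq_zero (hA : ∀ i k j l, A i k j l = -A k i j l) (y : ι → ℝ) :
    ∑ i, ∑ j, (∑ k, ∑ l, A i k j l * y k * y l) * (y i * y j) = 0 := by
  have : ∀ i j, (∑ k, ∑ l, A i k j l * y k * y l) * (y i * y j) =
      ∑ k, ∑ l, A i k j l * y i * y k * y j * y l := by
    intro i j
    simp only [Finset.sum_mul]
    exact Finset.sum_congr rfl fun k _ => Finset.sum_congr rfl fun l _ => by ring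
  simp only [this]
  rw [Finset.sum_congr rfl fun i _ => Finset.sum_comm]
  refine sum_sum_eq_zero_of_antisymm _ fun i k => ?_
  simp only [← Finset.sum_neg_distrib, hA i k]
  exact Finset.sum_congr rfl fun j _ => Finset.sum_congr rfl fun l _ => by ring

theorem sum_curvature_trace_eq_zero (hA : ∀ k l, ∑ i, A i k i l = 0) (y : ι → ℝ) :
    ∑ i, ∑ k, ∑ l, A i k i l * y k * y l = 0 := by
  rw [Finset.sum_comm]
  refine Finset.sum_eq_zero fun k _ => ?_
  rw [Finset.sum_comm]
  refine Finset.sum_eq_zero fun l _ => ?_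
  simp only [← Finset.sum_mul, hA, zero_mul]

theorem sum_sum_curvature_mul_radialHessian [DecidableEq ι]
    (hA₁ : ∀ i k j l, A i k j l = -A k i j l) (hA₂ : ∀ k l, ∑ i, A i k i l = 0)
    (B : ι → ι → ℝ) (hB : ∑ i, B i i = 0) (y : ι → ℝ)
    (t a b : ℝ) :
    ∑ i, ∑ j, ((1 / 3) * (∑ k, ∑ l, A i k j l * y k * y l) + B i j * t) *
        (b * (if i = j then 1 else 0) + a * (y i * y j)) =
      a * t * ∑ i, ∑ j, B i j * (y i * y j) := by
  set Q : ι → ι → ℝ := fun i j => ∑ k, ∑ l, A i k j l * y k * y l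
  calc _ = ∑ i, ∑ j, (b * ((if i = j then 1 else 0) * ((1 / 3) * Q i j + B i j * t)) +
          a * ((1 / 3) * (Q i j * (y i * y j)) + t * (B i j * (y i * y j)))) :=
        Finset.sum_congr rfl fun i _ => Finset.sum_congr rfl fun j _ => by ring
    _ = b * ((1 / 3) * ∑ i, Q i i + t * ∑ i, B i i) +
          a * ((1 / 3) * ∑ i, ∑ j, Q i j * (y i * y j) + t * ∑ i, ∑ j, B i j * (y i * y j)) := by
        simp only [Finset.sum_add_distrib, ← Finset.mul_sum, ite_mul, one_mul, zero_mul,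
          Finset.sum_ite_eq, Finset.mem_univ, if_true, mul_comm _ t]
    _ = _ := by
        simp only [Q, sum_curvature_trace_eq_zero A hA₂, sum_curvature_mul_mul_eq_zero A hA₁, hB]
        ring

end Algebra

section HalfSpace

variable {α : Type*} [MeasureSpace α] [SFinite (volume : Measure α)]

theorem setIntegral_halfSpace_comp_prodMap {f : α → α} (hf : MeasurePreserving f)
    (hf' : Function.Involutive f) (F : α × ℝ → ℝ) :
    ∫ x in {x : α × ℝ | 0 < x.2}, F (f x.1, x.2) = ∫ x in {x : α × ℝ | 0 < x.2}, F x := by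
  have hmp : MeasurePreserving (Prod.map f id) (volume : Measure (α × ℝ)) volume := by
    simpa only [← Measure.volume_eq_prod] using hf.prod (MeasurePreserving.id volume)
  have hemb : MeasurableEmbedding (Prod.map f id) :=
    (MeasurableEquiv.ofInvolutive _ (hf'.prodMap fun _ => rfl)
      hmp.measurable).measurableEmbedding
  exact hmp.setIntegral_preimage_emb hemb F {x | 0 < x.2}

end HalfSpace

section Radial

variable {m : ℕ}

theorem nsqT_nonneg (y : Fin m → ℝ) : 0 ≤ nsqT y :=
  Finset.sum_nonneg fun k _ => sq_nonneg (y k)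

theorem sq_le_nsqT (y : Fin m → ℝ) (i : Fin m) : y i ^ 2 ≤ nsqT y :=
  Finset.single_le_sum (fun k _ => sq_nonneg (y k)) (Finset.mem_univ i)

theorem nsqT_comp_perm (σ : Equiv.Perm (Fin m)) (y : Fin m → ℝ) : nsqT (y ∘ σ) = nsqT y :=
  Equiv.sum_comp σ fun k => y k ^ 2

def negCoord (i : Fin m) (y : Fin m → ℝ) : Fin m → ℝ := fun k => if k = i then -y k else y k

@[simp]
theorem negCoord_self (i : Fin m) (y : Fin m → ℝ) : negCoord i y i = -y i := if_pos rfl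

@[simp]
theorem negCoord_of_ne {i k : Fin m} (h : k ≠ i) (y : Fin m → ℝ) : negCoord i y k = y k :=
  if_neg h

theorem negCoord_involutive (i : Fin m) : Function.Involutive (negCoord i) := by
  intro y
  ext k
  by_cases h : k = i
  · subst h; simp
  · simp [h]

theorem nsqT_negCoord (i : Fin m) (y : Fin m → ℝ) : nsqT (negCoord i y) = nsqT y :=
  Finset.sum_congr rfl fun k _ => by
    by_cases h : k = i
    · subst h; simp
    · simp [h]

theorem measurePreserving_negCoord (i : Fin m) : MeasurePreserving (negCoord i) :=
  volume_preserving_pi (f := fun k t => if k = i then -t else t) fun k => by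
    split_ifs
    · exact Measure.measurePreserving_neg volume
    · exact MeasurePreserving.id volume

theorem measurePreserving_comp_perm (σ : Equiv.Perm (Fin m)) :
    MeasurePreserving (fun y : Fin m → ℝ => y ∘ σ) := by
  have h := volume_measurePreserving_piCongrLeft (fun _ : Fin m => ℝ) σ.symm
  have he : ⇑(MeasurableEquiv.piCongrLeft (fun _ : Fin m => ℝ) σ.symm) = fun y => y ∘ σ := by
    ext y k
    simp [← MeasurableEquiv.piCongrLeft_apply_apply σ.symm (β := fun _ => ℝ) y (σ k)]
  rwa [he] at h

theorem setIntegral_halfSpace_mul_radial_of_ne (W : ℝ → ℝ → ℝ) {i j : Fin m} (hij : i ≠ j) :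
    ∫ x in {x : (Fin m → ℝ) × ℝ | 0 < x.2}, x.1 i * x.1 j * W (nsqT x.1) x.2 = 0 := by
  have h := setIntegral_halfSpace_comp_prodMap (measurePreserving_negCoord i)
    (negCoord_involutive i) (fun x => x.1 i * x.1 j * W (nsqT x.1) x.2)
  simp only [nsqT_negCoord, negCoord_self, negCoord_of_ne hij.symm, neg_mul, integral_neg] at h
  linarith

theorem setIntegral_halfSpace_sq_mul_radial (W : ℝ → ℝ → ℝ) (i j : Fin m) :
    ∫ x in {x : (Fin m → ℝ) × ℝ | 0 < x.2}, x.1 i * x.1 i * W (nsqT x.1) x.2 =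
      ∫ x in {x : (Fin m → ℝ) × ℝ | 0 < x.2}, x.1 j * x.1 j * W (nsqT x.1) x.2 := by
  have hinv : Function.Involutive (fun y : Fin m → ℝ => y ∘ Equiv.swap i j) := by
    intro y; ext k; simp
  have h := setIntegral_halfSpace_comp_prodMap (measurePreserving_comp_perm (Equiv.swap i j))
    hinv (fun x => x.1 i * x.1 i * W (nsqT x.1) x.2)
  simpa only [nsqT_comp_perm, Function.comp_apply, Equiv.swap_apply_left] using h.symm

theorem setIntegral_halfSpace_traceless_mul_radial_eq_zero (B : Fin m → Fin m → ℝ)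
    (hB : ∑ i, B i i = 0) (W : ℝ → ℝ → ℝ)
    (hW : ∀ i j, IntegrableOn (fun x => x.1 i * x.1 j * W (nsqT x.1) x.2)
      {x : (Fin m → ℝ) × ℝ | 0 < x.2}) :
    ∫ x in {x : (Fin m → ℝ) × ℝ | 0 < x.2},
      ∑ i, ∑ j, B i j * (x.1 i * x.1 j * W (nsqT x.1) x.2) = 0 := by
  rw [integral_finsetSum _ fun i _ => integrable_finsetSum _ fun j _ => (hW i j).const_mul _]
  simp_rw [integral_finsetSum _ fun j _ => (hW _ j).const_mul _, integral_const_mul]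
  exact sum_sum_mul_eq_zero_of_trace_eq_zero B _ hB
    (fun i j hij => setIntegral_halfSpace_mul_radial_of_ne W hij)
    (setIntegral_halfSpace_sq_mul_radial W)

end Radial

section Bubble

variable {m : ℕ} {D : ℝ}

def bubbleBase (D : ℝ) (x : (Fin m → ℝ) × ℝ) : ℝ := nsqT x.1 + (x.2 + D) ^ 2 - 1

theorem continuous_bubbleBase (D : ℝ) : Continuous (bubbleBase (m := m) D) := by
  unfold bubbleBase nsqT
  fun_prop

theorem norm_sq_le_nsqT_add_sq (x : (Fin m → ℝ) × ℝ) : ‖x‖ ^ 2 ≤ nsqT x.1 + x.2 ^ 2 := by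
  have h : ‖x‖ ≤ √(nsqT x.1 + x.2 ^ 2) := by
    refine max_le ((pi_norm_le_iff_of_nonneg (sqrt_nonneg _)).2 fun i => ?_) ?_
    · rw [Real.norm_eq_abs]
      exact abs_le_sqrt (by linarith [sq_le_nsqT x.1 i, sq_nonneg x.2])
    · rw [Real.norm_eq_abs]
      exact abs_le_sqrt (by linarith [nsqT_nonneg x.1])
  calc ‖x‖ ^ 2 ≤ √(nsqT x.1 + x.2 ^ 2) ^ 2 := pow_le_pow_left₀ (norm_nonneg _) h 2
    _ = nsqT x.1 + x.2 ^ 2 := sq_sqrt (by linarith [nsqT_nonneg x.1, sq_nonneg x.2])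

theorem nsqT_add_sq_add_le_bubbleBase {x : (Fin m → ℝ) × ℝ} (hD : 0 ≤ D) (hx : 0 ≤ x.2) :
    nsqT x.1 + x.2 ^ 2 + (D ^ 2 - 1) ≤ bubbleBase D x := by
  unfold bubbleBase
  nlinarith

theorem bubbleBase_pos {x : (Fin m → ℝ) × ℝ} (hD : 1 < D) (hx : 0 ≤ x.2) :
    0 < bubbleBase D x := by
  have := nsqT_add_sq_add_le_bubbleBase (D := D) (x := x) (by linarith) hx
  nlinarith [nsqT_nonneg x.1]

theorem exists_pos_mul_one_add_norm_sq_le_bubbleBase (hD : 1 < D) :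
    ∃ c > 0, ∀ x : (Fin m → ℝ) × ℝ, 0 ≤ x.2 → c * (1 + ‖x‖) ^ 2 ≤ bubbleBase D x := by
  have hμ : 0 < min (D ^ 2 - 1) 1 := lt_min (by nlinarith) one_pos
  refine ⟨min (D ^ 2 - 1) 1 / 2, by positivity, fun x hx => ?_⟩
  have hs := nsqT_add_sq_add_le_bubbleBase (D := D) (by linarith) hx
  have hx' := norm_sq_le_nsqT_add_sq x
  have hμ₁ := min_le_left (D ^ 2 - 1) 1
  have hμ₂ := min_le_right (D ^ 2 - 1) 1
  nlinarith [sq_nonneg (1 - ‖x‖), nsqT_nonneg x.1, sq_nonneg x.2,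
    mul_le_mul_of_nonneg_right hμ₂ (add_nonneg (nsqT_nonneg x.1) (sq_nonneg x.2))]

theorem integrableOn_bubbleBase_rpow_neg (hD : 1 < D) {p : ℝ} (hp : (m : ℝ) + 1 < 2 * p) :
    IntegrableOn (fun x => bubbleBase D x ^ (-p)) {x : (Fin m → ℝ) × ℝ | 0 < x.2} := by
  obtain ⟨c, hc, hbound⟩ := exists_pos_mul_one_add_norm_sq_le_bubbleBase (m := m) hD
  have hdim : (Module.finrank ℝ ((Fin m → ℝ) × ℝ) : ℝ) < 2 * p := by simpa using hp
  have hmeas : Measurable fun x => bubbleBase (m := m) D x ^ (-p) :=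
    (continuous_bubbleBase D).measurable.pow_const _
  have : (volume : Measure ((Fin m → ℝ) × ℝ)).IsAddHaarMeasure := by
    rw [Measure.volume_eq_prod]; infer_instance
  refine Integrable.mono' ((integrable_one_add_norm hdim).const_mul (c ^ (-p))).integrableOn
    hmeas.aestronglyMeasurable ?_
  refine (ae_restrict_iff' (measurableSet_lt measurable_const measurable_snd)).2
    (Filter.Eventually.of_forall fun x hx => ?_)
  have hs := hbound x hx.le
  rw [Real.norm_of_nonneg (rpow_nonneg (bubbleBase_pos hD hx.le).le _)]
  calc bubbleBase D x ^ (-p) ≤ (c * (1 + ‖x‖) ^ 2) ^ (-p) :=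
        rpow_le_rpow_of_nonpos (by positivity) hs (by linarith)
    _ = c ^ (-p) * (1 + ‖x‖) ^ (-(2 * p)) := by
        rw [mul_rpow hc.le (by positivity), ← rpow_natCast, ← rpow_mul (by positivity)]
        ring_nf

theorem integrableOn_mul_mul_sq_mul_bubbleBase_rpow_neg (hD : 1 < D) {p : ℝ}
    (hp : (m : ℝ) + 1 < 2 * (p - 2)) (i j : Fin m) :
    IntegrableOn (fun x => x.1 i * x.1 j * (x.2 ^ 2 * bubbleBase D x ^ (-p)))
      {x : (Fin m → ℝ) × ℝ | 0 < x.2} := by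
  refine Integrable.mono' (integrableOn_bubbleBase_rpow_neg hD hp) ?_ ?_
  · have := (continuous_bubbleBase (m := m) D).measurable
    exact Measurable.aestronglyMeasurable (by fun_prop)
  refine (ae_restrict_iff' (measurableSet_lt measurable_const measurable_snd)).2
    (Filter.Eventually.of_forall fun x hx => ?_)
  have hs := nsqT_add_sq_add_le_bubbleBase (D := D) (by linarith) hx.le
  have hspos := bubbleBase_pos hD hx.le
  have hij : |x.1 i * x.1 j| ≤ nsqT x.1 := by
    rw [abs_le]
    constructor <;> nlinarith [sq_le_nsqT x.1 i, sq_le_nsqT x.1 j, nsqT_nonneg x.1,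
      sq_nonneg (x.1 i + x.1 j), sq_nonneg (x.1 i - x.1 j)]
  rw [Real.norm_eq_abs, abs_mul,
    abs_of_nonneg (by positivity : 0 ≤ x.2 ^ 2 * bubbleBase D x ^ (-p)), neg_sub,
    rpow_sub hspos, rpow_two, rpow_neg hspos.le, div_eq_mul_inv]
  have hD' : 0 ≤ D ^ 2 - 1 := by nlinarith
  have hs2 : |x.1 i * x.1 j| * x.2 ^ 2 ≤ bubbleBase D x ^ 2 := by
    have h₁ : nsqT x.1 ≤ bubbleBase D x := by linarith [sq_nonneg x.2]
    have h₂ : x.2 ^ 2 ≤ bubbleBase D x := by linarith [nsqT_nonneg x.1]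
    nlinarith [mul_le_mul (hij.trans h₁) h₂ (sq_nonneg _) hspos.le]
  nlinarith [inv_pos.2 (rpow_pos_of_pos hspos p)]
end Bubble

section Hessian

variable {n : ℕ} {D : ℝ}

theorem differentiableAt_and_pdT_bubbleBase (i : Fin (n - 1)) (x : Pt n) :
    DifferentiableAt ℝ (bubbleBase D) x ∧ pdT i (bubbleBase D) x = 2 * x.1 i := by
  have h := ((HasFDerivAt.fun_sum (u := Finset.univ) fun k _ =>
    ((hasFDerivAt_apply k x.1).comp x (hasFDerivAt_fst (𝕜 := ℝ) (p := x))).pow 2).add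
      ((hasFDerivAt_snd.add_const D).pow 2)).sub_const 1
  refine ⟨h.differentiableAt, ?_⟩
  rw [pdT, HasFDerivAt.fderiv (f := bubbleBase D) h]
  simp [Pi.single_apply]

theorem pdT_bubbleBase_rpow (p : ℝ) (i : Fin (n - 1)) {x : Pt n} (hx : bubbleBase D x ≠ 0) :
    pdT i (fun y => bubbleBase D y ^ p) x = 2 * p * (bubbleBase D x ^ (p - 1) * x.1 i) := by
  obtain ⟨hd, hpd⟩ := differentiableAt_and_pdT_bubbleBase (D := D) i x
  rw [pdT] at hpd
  rw [pdT, (hd.hasFDerivAt.rpow_const (p := p) (Or.inl hx)).fderiv, smul_apply, smul_eq_mul, hpd]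
  ring

theorem pdT_pdT_bubbleBase_rpow (p : ℝ) (i j : Fin (n - 1)) {x : Pt n} (hx : 0 < bubbleBase D x) :
    pdT j (pdT i (fun y => bubbleBase D y ^ p)) x =
      2 * p * bubbleBase D x ^ (p - 1) * (if i = j then 1 else 0) +
        4 * p * (p - 1) * bubbleBase D x ^ (p - 2) * (x.1 i * x.1 j) := by
  have hev : pdT i (fun y => bubbleBase D y ^ p) =ᶠ[𝓝 x]
      fun y => 2 * p * (bubbleBase D y ^ (p - 1) * y.1 i) := by
    filter_upwards [continuousAt_const.eventually_lt (continuous_bubbleBase D).continuousAt hx]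
      with y hy
    exact pdT_bubbleBase_rpow p i hy.ne'
  obtain ⟨hd, hpd⟩ := differentiableAt_and_pdT_bubbleBase (D := D) j x
  have h := ((hd.hasFDerivAt.rpow_const (p := p - 1) (Or.inl hx.ne')).mul
    ((hasFDerivAt_apply i x.1).comp x (hasFDerivAt_fst (𝕜 := ℝ) (p := x)))).const_mul (2 * p)
  rw [pdT, hev.fderiv_eq,
    HasFDerivAt.fderiv (f := fun y => 2 * p * (bubbleBase D y ^ (p - 1) * y.1 i)) h]
  rw [pdT] at hpd
  simp only [Function.comp_apply, smul_add, add_apply, smul_apply, ContinuousLinearMap.comp_apply,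
    ContinuousLinearMap.coe_fst', ContinuousLinearMap.proj_apply, Pi.single_apply, smul_eq_mul,
    mul_ite, mul_one, mul_zero, hpd, add_right_inj]
  rw [sub_sub, one_add_one_eq_two]
  ring

theorem pdT_const_mul (c : ℝ) (i : Fin (n - 1)) (f : Pt n → ℝ) :
    pdT i (fun y => c * f y) = fun x => c * pdT i f x := by
  ext x
  exact congrArg (· (Pi.single i 1, 0))
    (congrFun (fderiv_const_smul_field (𝕜 := ℝ) (f := f) c) x)

end Hessian

theorem exists_eqOn_curvature_hessian_bubble_mul_bubble {n : ℕ}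
    (A : Fin (n - 1) → Fin (n - 1) → Fin (n - 1) → Fin (n - 1) → ℝ)
    (hA₁ : ∀ i k j l, A i k j l = -A k i j l) (hA₂ : ∀ k l, ∑ i, A i k i l = 0)
    (B : Fin (n - 1) → Fin (n - 1) → ℝ) (hB : ∑ i, B i i = 0) (cn K : ℝ) {D : ℝ} (hD : 1 < D) :
    ∃ κ : ℝ, Set.EqOn
      (fun x : Pt n => (cn * ∑ i, ∑ j,
        ((1 / 3) * (∑ k, ∑ l, A i k j l * x.1 k * x.1 l) + B i j * x.2 ^ 2) *
          pdT j (pdT i (bubble n K D)) x) * bubble n K D x)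
      (fun x => κ * ∑ i, ∑ j, B i j * (x.1 i * x.1 j * (x.2 ^ 2 * bubbleBase D x ^ (-(n : ℝ)))))
      {x : Pt n | 0 < x.2} := by
  set c := (4 * (n : ℝ) * ((n : ℝ) - 1)) ^ (((n : ℝ) - 2) / 4) * |K| ^ (-(((n : ℝ) - 2) / 4))
  set q : ℝ := -(((n : ℝ) - 2) / 2)
  have hU : bubble n K D = fun y => c * bubbleBase D y ^ q := rfl
  refine ⟨cn * c ^ 2 * (4 * q * (q - 1)), fun x hx => ?_⟩
  set s := bubbleBase D x
  have hs : 0 < s := bubbleBase_pos hD (hx.le)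
  have hH : ∀ i j, pdT j (pdT i (bubble n K D)) x =
      c * (2 * q * s ^ (q - 1)) * (if i = j then 1 else 0) +
        c * (4 * q * (q - 1) * s ^ (q - 2)) * (x.1 i * x.1 j) := by
    intro i j
    rw [hU, pdT_const_mul, pdT_const_mul]
    dsimp only
    rw [pdT_pdT_bubbleBase_rpow q i j hs]
    ring
  have hexp : s ^ (q - 2) * s ^ q = s ^ (-(n : ℝ)) := by
    rw [← rpow_add hs]
    congr 1
    ring
  have hpull : ∀ w : ℝ, ∑ i, ∑ j, B i j * (x.1 i * x.1 j * w) =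
      w * ∑ i, ∑ j, B i j * (x.1 i * x.1 j) := by
    intro w
    simp only [Finset.mul_sum]
    exact Finset.sum_congr rfl fun i _ => Finset.sum_congr rfl fun j _ => by ring
  have hUx : bubble n K D x = c * s ^ q := rfl
  simp only [hH]
  rw [sum_sum_curvature_mul_radialHessian A hA₁ hA₂ B hB, hpull, hUx, ← hexp]
  ring

theorem stmt_7_general (n : ℕ) (hn : 5 ≤ n) (K D : ℝ) (hD : 1 < D)
    (cn : ℝ)
    (A : Fin (n - 1) → Fin (n - 1) → Fin (n - 1) → Fin (n - 1) → ℝ)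
    (B : Fin (n - 1) → Fin (n - 1) → ℝ)
    (hA1 : ∀ i k j l, A i k j l = -A k i j l)
    (hA4 : ∀ k l, ∑ i, A i k i l = 0)
    (hB2 : ∑ i, B i i = 0)
    (U : Pt n → ℝ) (hU : U = bubble n K D)
    (E : Pt n → ℝ)
    (hE : E = fun x : Pt n =>
      cn * ∑ i, ∑ j,
        ((1 / 3) * (∑ k, ∑ l, A i k j l * x.1 k * x.1 l) + B i j * x.2 ^ 2) *
          pdT j (pdT i U) x) :
    IntegrableOn (fun x : Pt n => E x * U x) {x : Pt n | 0 < x.2} ∧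
    ∫ x in {x : Pt n | 0 < x.2}, E x * U x = 0 := by
  subst hU hE
  obtain ⟨κ, hκ⟩ := exists_eqOn_curvature_hessian_bubble_mul_bubble A hA1 hA4 B hB2 cn K hD
  have hS : MeasurableSet {x : Pt n | 0 < x.2} := measurableSet_lt measurable_const measurable_snd
  have hp : ((n - 1 : ℕ) : ℝ) + 1 < 2 * ((n : ℝ) - 2) := by
    have h5 : (5 : ℝ) ≤ n := by exact_mod_cast hn
    rw [Nat.cast_sub (by omega), Nat.cast_one]
    linarith
  have hmom := integrableOn_mul_mul_sq_mul_bubbleBase_rpow_neg hD hp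
  refine ⟨IntegrableOn.congr_fun ((integrable_finsetSum _ fun i _ => integrable_finsetSum _
    fun j _ => (hmom i j).const_mul (B i j)).const_mul κ) hκ.symm hS, ?_⟩
  rw [setIntegral_congr_fun hS hκ, integral_const_mul]
  exact mul_eq_zero_of_right κ (setIntegral_halfSpace_traceless_mul_radial_eq_zero B hB2
    (fun r t => t ^ 2 * (r + (t + D) ^ 2 - 1) ^ (-(n : ℝ))) hmom)

/-- under the curvature symmetry hypotheses on `A` and `B`,
`∫_{ℝⁿ₊} E U dx = 0`, the integrand being absolutely integrable, where
`E = cₙ Σᵢⱼ [ (1/3) Σₖₗ Aᵢₖⱼₗ xₖ xₗ + Bᵢⱼ xₙ² ] ∂²ᵢⱼU`. -/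
theorem stmt_7 (n : ℕ) (hn : 5 ≤ n) (K D : ℝ) (hK : K < 0) (hD : 1 < D)
    (cn : ℝ) (hcn : cn = 4 * ((n : ℝ) - 1) / ((n : ℝ) - 2))
    (A : Fin (n - 1) → Fin (n - 1) → Fin (n - 1) → Fin (n - 1) → ℝ)
    (B : Fin (n - 1) → Fin (n - 1) → ℝ)
    (hA1 : ∀ i k j l, A i k j l = -A k i j l)
    (hA2 : ∀ i k j l, A i k j l = -A i k l j)
    (hA3 : ∀ i k j l, A i k j l = A j l i k)
    (hA4 : ∀ k l, ∑ i, A i k i l = 0)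
    (hB1 : ∀ i j, B i j = B j i)
    (hB2 : ∑ i, B i i = 0)
    (U : Pt n → ℝ) (hU : U = bubble n K D)
    (E : Pt n → ℝ)
    (hE : E = fun x : Pt n =>
      cn * ∑ i, ∑ j,
        ((1 / 3) * (∑ k, ∑ l, A i k j l * x.1 k * x.1 l) + B i j * x.2 ^ 2) *
          pdT j (pdT i U) x) :
    IntegrableOn (fun x : Pt n => E x * U x) {x : Pt n | 0 < x.2} ∧
    ∫ x in {x : Pt n | 0 < x.2}, E x * U x = 0 :=
  stmt_7_general n hn K D hD cn A B hA1 hA4 hB2 U hU E hE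
end
end

section
/- One has the strict inequality (n−3) φ̃_{(n−1)/2} < 4 φ̂_{(n−3)/2}; equivalently, (n−3) ∫_𝔇^∞ (t−𝔇)⁴ (t²−1)^{−(n−1)/2} dt < 4 ∫_𝔇^∞ (t−𝔇)² (t²−1)^{−(n−3)/2} dt. (This is the strict negativity of the quantity I₁ appearing in the expansion of the reduced energy, i.e. the positivity of the constant 𝚂.) -/
/-!
Since `t - D ≤ t`, the quartic integral is at most `∫ t (t - D)³ (t² - 1)^{-(n-1)/2}`, and
`t (t² - 1)^{-(n-1)/2}` is, up to the factor `-1/(n-3)`, the derivative of `(t² - 1)^{-(n-3)/2}`.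
Integrating by parts (the boundary terms vanish because `(t - D)³` vanishes at `D` and
`(t - D)³ (t² - 1)^{-(n-3)/2} = O(t^{6-n})` at infinity) turns `(n - 3)` times that integral into
`3 ∫ (t - D)² (t² - 1)^{-(n-3)/2}`, which is strictly less than four times the same positive
integral.
-/

noncomputable section

open Real MeasureTheory Set Filter Topology

section SqSubOneRpow

variable {D : ℝ}

lemma sq_sub_one_pos_of_one_lt {t : ℝ} (ht : 1 < t) : 0 < t ^ 2 - 1 := by
  nlinarith

lemma sq_sub_one_rpow_neg_le (hD : 1 < D) {c t : ℝ} (hc : 0 ≤ c) (ht : D < t) :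
    (t ^ 2 - 1) ^ (-c) ≤ (1 - D⁻¹ ^ 2) ^ (-c) * t ^ (-(2 * c)) := by
  have ht0 : 0 < t := by linarith
  have hκ : 0 < 1 - D⁻¹ ^ 2 := by
    have : D⁻¹ < 1 := inv_lt_one_of_one_lt₀ hD
    nlinarith [inv_pos.2 (zero_lt_one.trans hD)]
  have hle : (1 - D⁻¹ ^ 2) * t ^ 2 ≤ t ^ 2 - 1 := by
    have : 1 ≤ t * D⁻¹ := by
      rw [← mul_inv_cancel₀ (by linarith : D ≠ 0)]
      exact mul_le_mul_of_nonneg_right ht.le (by positivity)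
    nlinarith
  calc (t ^ 2 - 1) ^ (-c) ≤ ((1 - D⁻¹ ^ 2) * t ^ 2) ^ (-c) :=
        rpow_le_rpow_of_nonpos (by positivity) hle (by linarith)
    _ = (1 - D⁻¹ ^ 2) ^ (-c) * t ^ (-(2 * c)) := by
        rw [mul_rpow hκ.le (by positivity), ← rpow_natCast t 2, ← rpow_mul ht0.le]
        congr 2
        push_cast
        ring

lemma integrableOn_Ioi_mul_sq_sub_one_rpow_neg (hD : 1 < D) {c r : ℝ} (hc : 0 ≤ c)
    (hr : r - 2 * c < -1) {P : ℝ → ℝ} (hP : Continuous P) (hbd : ∀ t, D < t → |P t| ≤ t ^ r) :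
    IntegrableOn (fun t => P t * (t ^ 2 - 1) ^ (-c)) (Ioi D) := by
  have hmajorant : IntegrableOn (fun t => (1 - D⁻¹ ^ 2) ^ (-c) * t ^ (r - 2 * c)) (Ioi D) :=
    (integrableOn_Ioi_rpow_of_lt hr (by linarith)).const_mul _
  refine hmajorant.mono' ?_ ?_
  · refine (hP.continuousOn.mul (ContinuousOn.rpow_const (by fun_prop) fun t ht => ?_))
      |>.aestronglyMeasurable measurableSet_Ioi
    exact Or.inl (sq_sub_one_pos_of_one_lt (hD.trans ht)).ne'
  · filter_upwards [ae_restrict_mem measurableSet_Ioi] with t (ht : D < t)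
    have ht0 : 0 < t := by linarith
    have hbase := sq_sub_one_pos_of_one_lt (hD.trans ht)
    rw [norm_mul, norm_eq_abs, norm_of_nonneg (rpow_nonneg hbase.le _)]
    calc |P t| * (t ^ 2 - 1) ^ (-c)
        ≤ t ^ r * ((1 - D⁻¹ ^ 2) ^ (-c) * t ^ (-(2 * c))) :=
          mul_le_mul (hbd t ht) (sq_sub_one_rpow_neg_le hD hc ht) (by positivity) (by positivity)
      _ = (1 - D⁻¹ ^ 2) ^ (-c) * t ^ (r - 2 * c) := by
          rw [sub_eq_add_neg r, rpow_add ht0]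
          ring

lemma pow_sub_le_rpow (hD : 0 ≤ D) {t : ℝ} (ht : D ≤ t) (k : ℕ) : (t - D) ^ k ≤ t ^ (k : ℝ) := by
  rw [rpow_natCast]
  exact pow_le_pow_left₀ (by linarith) (by linarith) k

lemma integrableOn_Ioi_pow_sub_mul_sq_sub_one_rpow_neg (hD : 1 < D) {c : ℝ} {k : ℕ}
    (hk : (k : ℝ) - 2 * c < -1) :
    IntegrableOn (fun t => (t - D) ^ k * (t ^ 2 - 1) ^ (-c)) (Ioi D) := by
  refine integrableOn_Ioi_mul_sq_sub_one_rpow_neg hD (by linarith [k.cast_nonneg (α := ℝ)]) hk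
    (by fun_prop) fun t ht => ?_
  rw [abs_of_nonneg (pow_nonneg (by linarith) _)]
  exact pow_sub_le_rpow (by linarith) ht.le k

lemma integrableOn_Ioi_mul_pow_sub_mul_sq_sub_one_rpow_neg (hD : 1 < D) {c : ℝ} {k : ℕ}
    (hk : (k : ℝ) + 1 - 2 * c < -1) :
    IntegrableOn (fun t => t * (t - D) ^ k * (t ^ 2 - 1) ^ (-c)) (Ioi D) := by
  refine integrableOn_Ioi_mul_sq_sub_one_rpow_neg hD (by linarith [k.cast_nonneg (α := ℝ)]) hk
    (by fun_prop) fun t ht => ?_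
  have ht0 : 0 < t := by linarith
  rw [abs_of_nonneg (mul_nonneg ht0.le (pow_nonneg (by linarith) _)), rpow_add ht0, rpow_one,
    mul_comm]
  exact mul_le_mul_of_nonneg_right (pow_sub_le_rpow (by linarith) ht.le k) ht0.le

lemma tendsto_pow_sub_mul_sq_sub_one_rpow_neg (hD : 1 < D) {c : ℝ} {k : ℕ} (hk : (k : ℝ) < 2 * c) :
    Tendsto (fun t => (t - D) ^ k * (t ^ 2 - 1) ^ (-c)) atTop (𝓝 0) := by
  have hc : 0 ≤ c := by linarith [k.cast_nonneg (α := ℝ)]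
  have hmajorant : Tendsto (fun t : ℝ => (1 - D⁻¹ ^ 2) ^ (-c) * t ^ (k - 2 * c)) atTop (𝓝 0) := by
    simpa only [neg_sub, mul_zero] using
      (tendsto_rpow_neg_atTop (sub_pos.2 hk)).const_mul ((1 - D⁻¹ ^ 2) ^ (-c))
  refine squeeze_zero' ?_ ?_ hmajorant <;>
    filter_upwards [eventually_gt_atTop D] with t ht
  · have := sq_sub_one_pos_of_one_lt (hD.trans ht)
    have : 0 ≤ t - D := by linarith
    positivity
  · have ht0 : 0 < t := by linarith
    calc (t - D) ^ k * (t ^ 2 - 1) ^ (-c)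
        ≤ t ^ (k : ℝ) * ((1 - D⁻¹ ^ 2) ^ (-c) * t ^ (-(2 * c))) :=
          mul_le_mul (pow_sub_le_rpow (by linarith) ht.le k) (sq_sub_one_rpow_neg_le hD hc ht)
            (rpow_nonneg (sq_sub_one_pos_of_one_lt (hD.trans ht)).le _) (by positivity)
      _ = (1 - D⁻¹ ^ 2) ^ (-c) * t ^ ((k : ℝ) - 2 * c) := by
          rw [sub_eq_add_neg (k : ℝ), rpow_add ht0]
          ring

lemma hasDerivAt_pow_sub_mul_sq_sub_one_rpow_neg (c : ℝ) (k : ℕ) {t : ℝ} (ht : t ^ 2 - 1 ≠ 0) :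
    HasDerivAt (fun t => (t - D) ^ (k + 1) * (t ^ 2 - 1) ^ (-c))
      ((k + 1) * ((t - D) ^ k * (t ^ 2 - 1) ^ (-c))
        - 2 * c * (t * (t - D) ^ (k + 1) * (t ^ 2 - 1) ^ (-(c + 1)))) t := by
  have hpow : HasDerivAt (fun t => (t - D) ^ (k + 1)) (((k : ℝ) + 1) * (t - D) ^ k) t := by
    simpa using ((hasDerivAt_id t).sub_const D).fun_pow (k + 1)
  have hrpow :
      HasDerivAt (fun t => (t ^ 2 - 1) ^ (-c)) (2 * t * (-c) * (t ^ 2 - 1) ^ (-c - 1)) t := by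
    simpa using ((hasDerivAt_pow 2 t).sub_const 1).rpow_const (p := -c) (Or.inl ht)
  refine (hpow.mul hrpow).congr_deriv ?_
  rw [show -(c + 1) = -c - 1 by ring]
  ring

/-- Integration by parts against `t (t² - 1)^{-(c+1)} = -(2c)⁻¹ d/dt (t² - 1)^{-c}`. -/
lemma integral_mul_pow_sub_mul_sq_sub_one_rpow_neg (hD : 1 < D) {c : ℝ} {k : ℕ}
    (hk : (k : ℝ) + 1 < 2 * c) :
    2 * c * ∫ t in Ioi D, t * (t - D) ^ (k + 1) * (t ^ 2 - 1) ^ (-(c + 1))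
      = (k + 1) * ∫ t in Ioi D, (t - D) ^ k * (t ^ 2 - 1) ^ (-c) := by
  have hI₁ := integrableOn_Ioi_pow_sub_mul_sq_sub_one_rpow_neg hD (k := k) (c := c)
    (by linarith)
  have hI₂ := integrableOn_Ioi_mul_pow_sub_mul_sq_sub_one_rpow_neg hD (k := k + 1) (c := c + 1)
    (by push_cast; linarith)
  have hcont : ContinuousWithinAt (fun t => (t - D) ^ (k + 1) * (t ^ 2 - 1) ^ (-c)) (Ici D) D := by
    have hD₀ := (sq_sub_one_pos_of_one_lt hD).ne'
    exact ContinuousAt.continuousWithinAt (by fun_prop (disch := exact Or.inl hD₀))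
  have hFTC := integral_Ioi_of_hasDerivAt_of_tendsto hcont
    (fun t (ht : D < t) =>
      hasDerivAt_pow_sub_mul_sq_sub_one_rpow_neg c k (sq_sub_one_pos_of_one_lt (hD.trans ht)).ne')
    ((hI₁.const_mul _).sub (hI₂.const_mul _))
    (tendsto_pow_sub_mul_sq_sub_one_rpow_neg hD (by push_cast; linarith))
  rw [integral_sub (hI₁.const_mul _) (hI₂.const_mul _), integral_const_mul,
    integral_const_mul] at hFTC
  rw [sub_self, zero_pow k.succ_ne_zero, zero_mul, sub_self] at hFTC
  linarith

lemma integral_pow_sub_succ_le_integral_mul_pow_sub (hD : 1 < D) {c : ℝ} {k : ℕ} (hk : (k : ℝ) + 1 - 2 * c < -1) :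
    ∫ t in Ioi D, (t - D) ^ (k + 1) * (t ^ 2 - 1) ^ (-c)
      ≤ ∫ t in Ioi D, t * (t - D) ^ k * (t ^ 2 - 1) ^ (-c) := by
  refine setIntegral_mono_on (integrableOn_Ioi_pow_sub_mul_sq_sub_one_rpow_neg hD
    (by push_cast; linarith)) (integrableOn_Ioi_mul_pow_sub_mul_sq_sub_one_rpow_neg hD
    (by linarith)) measurableSet_Ioi fun t (ht : D < t) => ?_
  have : 0 ≤ t - D := by linarith
  rw [pow_succ']
  gcongr
  · exact rpow_nonneg (sq_sub_one_pos_of_one_lt (hD.trans ht)).le _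
  · linarith

lemma integral_pow_sub_mul_sq_sub_one_rpow_neg_pos (hD : 1 < D) {c : ℝ} {k : ℕ}
    (hk : (k : ℝ) - 2 * c < -1) :
    0 < ∫ t in Ioi D, (t - D) ^ k * (t ^ 2 - 1) ^ (-c) := by
  have hpos : ∀ t, D < t → 0 < (t - D) ^ k * (t ^ 2 - 1) ^ (-c) := fun t ht =>
    mul_pos (pow_pos (by linarith) _) (rpow_pos_of_pos (sq_sub_one_pos_of_one_lt (hD.trans ht)) _)
  have hsupp : Function.support (fun t => (t - D) ^ k * (t ^ 2 - 1) ^ (-c)) ∩ Ioi D = Ioi D :=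
    inter_eq_right.2 fun t ht => (hpos t ht).ne'
  rw [setIntegral_pos_iff_support_of_nonneg_ae
    ((ae_restrict_mem measurableSet_Ioi).mono fun t ht => (hpos t ht).le)
    (integrableOn_Ioi_pow_sub_mul_sq_sub_one_rpow_neg hD hk), hsupp, volume_Ioi]
  exact ENNReal.zero_lt_top

end SqSubOneRpow

/-- the strict inequality `(n-3) φ̃_{(n-1)/2} < 4 φ̂_{(n-3)/2}`,
i.e. the strict negativity of the quantity `I₁` (positivity of `𝚂`). -/
theorem stmt_16 (n : ℕ) (hn : 7 ≤ n) (D : ℝ) (hD : 1 < D) :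
    ((n : ℝ) - 3) *
        (∫ t in Set.Ioi D, (t - D) ^ 4 * (t ^ 2 - 1) ^ (-(((n : ℝ) - 1) / 2)))
      < 4 * ∫ t in Set.Ioi D, (t - D) ^ 2 * (t ^ 2 - 1) ^ (-(((n : ℝ) - 3) / 2)) := by
  have hn7 : (7 : ℝ) ≤ n := by exact_mod_cast hn
  set b : ℝ := ((n : ℝ) - 3) / 2 with hb
  have hb3 : 3 < 2 * b := by rw [hb]; linarith
  rw [show -(((n : ℝ) - 1) / 2) = -(b + 1) by rw [hb]; ring,
    show (n : ℝ) - 3 = 2 * b by rw [hb]; ring]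
  have hparts := integral_mul_pow_sub_mul_sq_sub_one_rpow_neg hD (c := b) (k := 2)
    (by norm_num; linarith)
  have hpos := integral_pow_sub_mul_sq_sub_one_rpow_neg_pos hD (c := b) (k := 2)
    (by norm_num; linarith)
  calc 2 * b * ∫ t in Ioi D, (t - D) ^ 4 * (t ^ 2 - 1) ^ (-(b + 1))
      ≤ 2 * b * ∫ t in Ioi D, t * (t - D) ^ 3 * (t ^ 2 - 1) ^ (-(b + 1)) :=
        mul_le_mul_of_nonneg_left (integral_pow_sub_succ_le_integral_mul_pow_sub hD (k := 3) (by norm_num; linarith))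
          (by linarith)
    _ = 3 * ∫ t in Ioi D, (t - D) ^ 2 * (t ^ 2 - 1) ^ (-b) := by
        convert hparts using 2
        norm_num
    _ < 4 * ∫ t in Ioi D, (t - D) ^ 2 * (t ^ 2 - 1) ^ (-b) := by linarith
end
end
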